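/- arXiv:1010.5455 — 4 statements merged into one kernel-verified Lean document; each statement's English description precedes it below -/
import Mathlib

section
/- Let Ω ⊂ ℝⁿ be a bounded, open, connected set with Lipschitz boundary and let A ⊂ Ω be an open Lipschitz set with ∂A ≠ ∅. Let W : ℝᵐ → ℝ be a nonnegative C¹ potential with W(a) = 0 satisfying hypothesis (H) with radius r₀ > 0, and let r satisfy 0 < 2r < r₀. Suppose u : Ω → ℝᵐ is C¹ with finite energy J_Ω(u) < ∞ and |u(x) − a| ≤ r on ∂A ∩ Ω. Write ρ(x) = |u(x) − a| and n(x) = (u(x) − a)/|u(x) − a|, let α : [0, ∞) → ℝ be given by α(τ) = 1 for τ ≤ r, α(τ) = (2r − τ)/r for r ≤ τ ≤ 2r, and α(τ) = 0 for τ ≥ 2r, and define w : Ω → ℝᵐ by w(x) = a + r·α(ρ(x))·n(x) for x ∈ A with ρ(x) > r, and w(x) = u(x) otherwise. Then w = u on Ω \ A, |w(x) − a| ≤ r for all x ∈ A, w is differentiable almost everywhere with ∫_Ω ‖Dw‖² dx ≤ ∫_Ω ‖Du‖² dx, and ∫_Ω W(w(x)) dx ≤ ∫_Ω W(u(x)) dx,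 with J_Ω(w) < J_Ω(u) provided the set {x ∈ A : r < ρ(x) < 2r} has positive Lebesgue measure or ∫_{A⁺} W(u(x)) dx > 0, where A⁺ = {x ∈ A : ρ(x) > 2r}. -/
open MeasureTheory Set

/-- Hilbert–Schmidt (Frobenius) norm of a linear map between Euclidean spaces. -/
noncomputable def hsNorm {n m : ℕ}
    (L : EuclideanSpace ℝ (Fin n) →L[ℝ] EuclideanSpace ℝ (Fin m)) : ℝ :=
  Real.sqrt (∑ i : Fin n, ‖L (EuclideanSpace.single i 1)‖ ^ 2)

/-- The energy functional `J_Ω(v) = ∫_Ω ((1/2)‖Dv‖² + W(v)) dx`. -/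
noncomputable def energy {n m : ℕ} (Ω : Set (EuclideanSpace ℝ (Fin n)))
    (W : EuclideanSpace ℝ (Fin m) → ℝ)
    (v : EuclideanSpace ℝ (Fin n) → EuclideanSpace ℝ (Fin m)) : ℝ :=
  ∫ x in Ω, ((1 / 2 : ℝ) * hsNorm (fderiv ℝ v x) ^ 2 + W (v x))

/-- Hypothesis (H): `a` is a global minimum of `W` with `W a = 0`, and for every
unit vector `w` the function `λ ↦ W (a + λ w)` is strictly increasing on `[0, r₀)`. -/
def HypH {m : ℕ} (W : EuclideanSpace ℝ (Fin m) → ℝ)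
    (a : EuclideanSpace ℝ (Fin m)) (r₀ : ℝ) : Prop :=
  W a = 0 ∧ (∀ v, W a ≤ W v) ∧
    ∀ w : EuclideanSpace ℝ (Fin m), ‖w‖ = 1 →
      StrictMonoOn (fun t : ℝ => W (a + t • w)) (Set.Ico (0 : ℝ) r₀)

/-- A set has Lipschitz boundary: uniform interior cone condition at every
boundary point (the standard equivalent of being locally the hypograph of a
Lipschitz function). -/
def HasLipschitzBoundary {n : ℕ} (s : Set (EuclideanSpace ℝ (Fin n))) : Prop :=
  ∀ x ∈ frontier s, ∃ ν : EuclideanSpace ℝ (Fin n), ∃ ε c : ℝ,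
    ‖ν‖ = 1 ∧ 0 < ε ∧ 0 < c ∧
    ∀ y ∈ s ∩ Metric.ball x ε, ∀ t ∈ Set.Ioo (0 : ℝ) ε,
      Metric.ball (y + t • ν) (c * t) ⊆ s

/-- `v` is differentiable almost everywhere on `Ω`. -/
def DiffAEOn {n m : ℕ} (Ω : Set (EuclideanSpace ℝ (Fin n)))
    (v : EuclideanSpace ℝ (Fin n) → EuclideanSpace ℝ (Fin m)) : Prop :=
  ∀ᵐ x ∂(volume.restrict Ω), DifferentiableAt ℝ v x

/-- The point of `ℝ²` (as Euclidean space) with coordinates `x₁, x₂`. -/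
noncomputable def mk2 (x₁ x₂ : ℝ) : EuclideanSpace ℝ (Fin 2) := WithLp.toLp 2 ![x₁, x₂]

/-!
Write `u = a + ρ n` with `ρ = ‖u - a‖`. Inside `A` the replacement is `w = a + ψ(ρ) n` for the
tent `ψ t = min t (max (2r - t) 0)`: `ψ(ρ) = r α(ρ)` for `ρ ≥ r` and `ψ(ρ) = ρ` for `ρ ≤ r`.
Since `ψ` is 1-Lipschitz with `0 ≤ ψ t ≤ t`, the radial map `z ↦ ψ(‖z‖) z / ‖z‖` is 1-Lipschitz,
and since `ρ ≤ r` on `∂A ∩ Ω` this gives `‖w y - w x‖ ≤ ‖u y - u x‖` for `y` near any `x ∈ Ω`.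
Hence `‖Dw v‖ ≤ ‖Du v‖` wherever `w` is differentiable. Away from the level sets `{ρ = r}` and
`A ∩ {ρ = 2r}` the map `w` is locally `u`, a constant, or a smooth function of `u`. At a Lebesgue
density point of a level set `Dρ = 0`, and the bounds `‖w - u‖ ≤ 2 |ρ - r|`, `‖w - a‖ ≤ |ρ - 2r|`
make `w` differentiable there as well. Finally `W ∘ w ≤ W ∘ u` by the radial monotonicity (H),
strictly where `r < ρ < 2r`, and `W ∘ w = W a = 0` where `ρ ≥ 2r`.
-/

open Filter Topology Metric Asymptotics
open scoped Pointwise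

section Differentiation

theorem continuousAt_of_eventually_norm_sub_le {E F : Type*} [NormedAddCommGroup E]
    [NormedAddCommGroup F] {f g : E → F} {x : E} (hf : ContinuousAt f x)
    (h : ∀ᶠ y in 𝓝 x, ‖g y - g x‖ ≤ ‖f y - f x‖) : ContinuousAt g x := by
  rw [ContinuousAt, tendsto_iff_norm_sub_tendsto_zero] at hf ⊢
  exact squeeze_zero' (Eventually.of_forall fun _ => norm_nonneg _) h hf

variable {E F G : Type*} [NormedAddCommGroup E] [NormedSpace ℝ E]
  [NormedAddCommGroup F] [NormedSpace ℝ F] [NormedAddCommGroup G] [NormedSpace ℝ G]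

theorem norm_fderiv_apply_le_of_eventually_norm_sub_le {f g : E → F} {x : E}
    (hg : DifferentiableAt ℝ g x) (hf : DifferentiableAt ℝ f x)
    (h : ∀ᶠ y in 𝓝 x, ‖g y - g x‖ ≤ ‖f y - f x‖) (v : E) :
    ‖fderiv ℝ g x v‖ ≤ ‖fderiv ℝ f x v‖ := by
  have hline : HasDerivAt (fun t : ℝ => x + t • v) v 0 := by
    simpa using ((hasDerivAt_id (0 : ℝ)).smul_const v).const_add x
  have slope {k : E → F} (hk : DifferentiableAt ℝ k x) :
      Tendsto (fun t : ℝ => ‖t⁻¹ • (k (x + t • v) - k x)‖) (𝓝[>] 0) (𝓝 ‖fderiv ℝ k x v‖) := by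
    have := (hk.hasFDerivAt.comp_hasDerivAt_of_eq 0 hline (by simp)).tendsto_slope_zero_right
    simpa using this.norm
  refine le_of_tendsto_of_tendsto (slope hg) (slope hf) ?_
  filter_upwards [nhdsWithin_le_nhds (hline.continuousAt.tendsto.eventually (by simpa using h))]
    with t ht
  rw [norm_smul, norm_smul]
  exact mul_le_mul_of_nonneg_left ht (norm_nonneg _)

theorem HasFDerivAt.of_eventually_norm_sub_le {g h : E → F} {φ : E → G} {L : E →L[ℝ] F}
    {x : E} {C : ℝ} (hh : HasFDerivAt h L x) (hφ : HasFDerivAt φ (0 : E →L[ℝ] G) x)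
    (hgx : g x = h x) (hle : ∀ᶠ y in 𝓝 x, ‖g y - h y‖ ≤ C * ‖φ y - φ x‖) :
    HasFDerivAt g L x := by
  have hgh : (fun y => g y - h y) =o[𝓝 x] fun y => y - x :=
    (IsBigO.of_bound C hle).trans_isLittleO (by simpa using hφ.isLittleO)
  refine HasFDerivAt.of_isLittleO ((hgh.add hh.isLittleO).congr_left fun y => ?_)
  rw [hgx]
  abel

variable [MeasurableSpace E] [BorelSpace E] [FiniteDimensional ℝ E]
  (μ : Measure E) [μ.IsAddHaarMeasure]

/-- At a Lebesgue density point `x` of `s`, the rescaled balls `{x} + r • closedBall z ε` meet `s`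
for small `r`; at a common point `x + r • a` the constancy of `f` forces `‖f' a‖ ≤ ε ‖a‖`. -/
theorem fderiv_eq_zero_of_tendsto_density {s : Set E} {f : E → F} {x : E}
    (hx : Tendsto (fun r => μ (s ∩ closedBall x r) / μ (closedBall x r)) (𝓝[>] 0) (𝓝 1))
    (hf : DifferentiableAt ℝ f x) (hfs : ∀ y ∈ s, f y = f x) : fderiv ℝ f x = 0 := by
  set L := fderiv ℝ f x
  ext1 z
  suffices key : ∀ ε > 0, ‖L z‖ ≤ ε * (‖z‖ + ε + ‖L‖) by
    have lim : Tendsto (fun ε : ℝ => ε * (‖z‖ + ε + ‖L‖)) (𝓝[>] 0) (𝓝 0) := by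
      have := (by fun_prop : Continuous fun ε : ℝ => ε * (‖z‖ + ε + ‖L‖)).tendsto 0
      simpa using this.mono_left nhdsWithin_le_nhds
    exact norm_le_zero_iff.1 (ge_of_tendsto lim (eventually_nhdsWithin_of_forall key))
  intro ε hε
  obtain ⟨ρ, hρ, hball⟩ : ∃ ρ > 0, ∀ y ∈ ball x ρ, ‖f y - f x - L (y - x)‖ ≤ ε * ‖y - x‖ :=
    Metric.eventually_nhds_iff_ball.1 (hf.hasFDerivAt.isLittleO.def hε)
  have hmeet : ∀ᶠ r in 𝓝[>] (0 : ℝ), (s ∩ ({x} + r • closedBall z ε)).Nonempty :=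
    Measure.eventually_nonempty_inter_smul_of_density_one μ s x hx _ measurableSet_closedBall
      (measure_closedBall_pos μ z hε).ne'
  have hsmall : ∀ᶠ r in 𝓝[>] (0 : ℝ), {x} + r • closedBall z ε ⊆ ball x ρ :=
    nhdsWithin_le_nhds (eventually_singleton_add_smul_subset isBounded_closedBall
      (ball_mem_nhds x hρ))
  obtain ⟨r, ⟨y, hys, hy⟩, hsub, hr⟩ := (hmeet.and (hsmall.and self_mem_nhdsWithin)).exists
  obtain ⟨a, ha, rfl⟩ : ∃ a ∈ closedBall z ε, y = x + r • a := by
    simp only [singleton_add, image_add_left, mem_preimage, mem_smul_set] at hy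
    obtain ⟨a, ha, hya⟩ := hy
    exact ⟨a, ha, by rw [hya, add_neg_cancel_left]⟩
  have hza : ‖z - a‖ ≤ ε := by rw [← dist_eq_norm, dist_comm]; exact ha
  have hLa : ‖L a‖ ≤ ε * ‖a‖ := by
    have := hball _ (hsub ⟨x, rfl, r • a, smul_mem_smul_set ha, rfl⟩)
    rw [hfs _ hys, sub_self, zero_sub, norm_neg, add_sub_cancel_left, map_smul, norm_smul,
      norm_smul, Real.norm_of_nonneg hr.le, mul_left_comm] at this
    exact le_of_mul_le_mul_left this hr
  calc ‖L z‖ ≤ ‖L a‖ + ‖L (z - a)‖ := by rw [map_sub]; exact norm_le_insert' _ _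
    _ ≤ ε * (‖z‖ + ε) + ‖L‖ * ε := by
      gcongr
      · exact hLa.trans (mul_le_mul_of_nonneg_left (by
          linarith [norm_le_insert' a z, norm_sub_rev a z]) hε.le)
      · exact L.le_opNorm_of_le hza
    _ = ε * (‖z‖ + ε + ‖L‖) := by ring

theorem ae_differentiableAt_of_norm_sub_le_levelSet {s : Set E} (hs : MeasurableSet s)
    {g h : E → F} {φ : E → ℝ} {c C : ℝ}
    (hh : ∀ x ∈ s, DifferentiableAt ℝ h x) (hφ : ∀ x ∈ s, DifferentiableAt ℝ φ x)
    (hφs : ∀ x ∈ s, φ x = c) (hgs : ∀ x ∈ s, g x = h x)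
    (hle : ∀ x ∈ s, ∀ᶠ y in 𝓝 x, ‖g y - h y‖ ≤ C * |φ y - c|) :
    ∀ᵐ x ∂μ, x ∈ s → DifferentiableAt ℝ g x := by
  filter_upwards [(ae_restrict_iff' hs).1 (Besicovitch.ae_tendsto_measure_inter_div μ s)]
    with x hx hxs
  have hφ0 : fderiv ℝ φ x = 0 := fderiv_eq_zero_of_tendsto_density μ (hx hxs) (hφ x hxs)
    fun y hy => by rw [hφs y hy, hφs x hxs]
  refine (HasFDerivAt.of_eventually_norm_sub_le (hh x hxs).hasFDerivAt
    (hφ0 ▸ (hφ x hxs).hasFDerivAt) (hgs x hxs) (C := C) ?_).differentiableAt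
  simpa [← hφs x hxs, Real.norm_eq_abs] using hle x hxs

end Differentiation

theorem ContinuousOn.measurableSet_inter_preimage {α γ : Type*} [TopologicalSpace α]
    [MeasurableSpace α] [OpensMeasurableSpace α] [TopologicalSpace γ] [MeasurableSpace γ]
    [BorelSpace γ] {f : α → γ} {s : Set α} {t : Set γ} (hf : ContinuousOn f s)
    (hs : IsOpen s) (ht : MeasurableSet t) : MeasurableSet (s ∩ f ⁻¹' t) := by
  have := hs.measurableSet.subtype_image
    ((continuousOn_iff_continuous_domRestrict.1 hf).measurable ht)
  rwa [domRestrict_eq, preimage_comp, Subtype.image_preimage_coe] at this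

theorem eventually_notMem_of_notMem_frontier {X : Type*} [TopologicalSpace X] {A : Set X}
    {x : X} (hA : IsOpen A) (hxA : x ∉ A) (hx : x ∉ frontier A) : ∀ᶠ y in 𝓝 x, y ∉ A := by
  have hcl : x ∉ closure A := fun hcl => hx ⟨hcl, by rwa [hA.interior_eq]⟩
  simpa [Filter.not_frequently] using mt mem_closure_iff_frequently.2 hcl

theorem setIntegral_lt_setIntegral_of_lt_on {α : Type*} [MeasurableSpace α] {μ : Measure α}
    {f g : α → ℝ} {s t : Set α} (hf : IntegrableOn f s μ) (hg : IntegrableOn g s μ)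
    (hfg : ∀ᵐ x ∂μ.restrict s, f x ≤ g x) (hts : t ⊆ s) (hlt : ∀ x ∈ t, f x < g x)
    (ht : 0 < μ t) : ∫ x in s, f x ∂μ < ∫ x in s, g x ∂μ := by
  rw [← sub_pos, ← integral_sub hg hf, integral_pos_iff_support_of_nonneg_ae
    (hfg.mono fun x hx => sub_nonneg.2 hx) (hg.sub hf)]
  calc 0 < μ t := ht
    _ = μ.restrict s t := (Measure.restrict_eq_self μ hts).symm
    _ ≤ _ := measure_mono fun x hx => (sub_pos.2 (hlt x hx)).ne'

section FoldProfile

def foldProfile (r t : ℝ) : ℝ := min t (max (2 * r - t) 0)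

variable {r t : ℝ}

theorem foldProfile_of_le (h : t ≤ r) : foldProfile r t = t :=
  min_eq_left (le_max_of_le_left (by linarith))

theorem foldProfile_of_mem_Icc (h₁ : r ≤ t) (h₂ : t ≤ 2 * r) : foldProfile r t = 2 * r - t := by
  rw [foldProfile, max_eq_left (by linarith), min_eq_right (by linarith)]

theorem foldProfile_of_two_mul_le (h : 2 * r ≤ t) (ht : 0 ≤ t) : foldProfile r t = 0 := by
  rw [foldProfile, max_eq_right (by linarith), min_eq_right ht]

theorem foldProfile_zero : foldProfile r 0 = 0 :=
  min_eq_left (le_max_right _ _)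

theorem foldProfile_nonneg (ht : 0 ≤ t) : 0 ≤ foldProfile r t :=
  le_min ht (le_max_right _ _)

theorem foldProfile_le_self : foldProfile r t ≤ t :=
  min_le_left _ _

theorem foldProfile_le (hr : 0 ≤ r) : foldProfile r t ≤ r := by
  rcases le_total t r with h | h
  · exact min_le_of_left_le h
  · exact min_le_of_right_le (max_le (by linarith) hr)

theorem lipschitzWith_foldProfile (r : ℝ) : LipschitzWith 1 (foldProfile r) := by
  show LipschitzWith 1 fun t => min t (max (2 * r - t) 0)
  simpa using LipschitzWith.id.min
    (((LipschitzWith.const (2 * r)).sub LipschitzWith.id).max_const 0)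

theorem abs_foldProfile_sub_self_le (ht : 0 ≤ t) : |foldProfile r t - t| ≤ 2 * |t - r| := by
  rcases le_total t r with h | h
  · simp [foldProfile_of_le h]
  rw [abs_of_nonneg (sub_nonneg.2 h)]
  rcases le_total t (2 * r) with h' | h'
  · rw [foldProfile_of_mem_Icc h h', abs_of_nonpos (by linarith)]
    linarith
  · rw [foldProfile_of_two_mul_le h' ht, zero_sub, abs_neg, abs_of_nonneg ht]
    linarith

theorem foldProfile_le_abs_sub (ht : 0 ≤ t) : foldProfile r t ≤ |t - 2 * r| := by
  rcases le_total t (2 * r) with h' | h'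
  · rw [abs_of_nonpos (by linarith)]
    rcases le_total t r with h | h
    · rw [foldProfile_of_le h]
      linarith
    · rw [foldProfile_of_mem_Icc h h']
      linarith
  · rw [foldProfile_of_two_mul_le h' ht]
    positivity

end FoldProfile

section RadialMap

variable {F : Type*} [NormedAddCommGroup F] [InnerProductSpace ℝ F] {ψ : ℝ → ℝ} {z : F}

noncomputable def radialMap (ψ : ℝ → ℝ) (z : F) : F :=
  (ψ ‖z‖ / ‖z‖) • z

theorem radialMap_zero (ψ : ℝ → ℝ) : radialMap ψ (0 : F) = 0 := by
  simp [radialMap]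

theorem norm_radialMap (hψ : ψ 0 = 0) (z : F) : ‖radialMap ψ z‖ = |ψ ‖z‖| := by
  rcases eq_or_ne z 0 with rfl | hz
  · simp [radialMap_zero, hψ]
  rw [radialMap, norm_smul, Real.norm_eq_abs, abs_div, abs_norm,
    div_mul_cancel₀ _ (norm_ne_zero_iff.2 hz)]

theorem radialMap_eq_self (h : ψ ‖z‖ = ‖z‖) : radialMap ψ z = z := by
  rcases eq_or_ne z 0 with rfl | hz
  · exact radialMap_zero ψ
  rw [radialMap, h, div_self (norm_ne_zero_iff.2 hz), one_smul]

theorem radialMap_sub_self (z : F) : radialMap ψ z - z = radialMap (fun t => ψ t - t) z := by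
  rcases eq_or_ne z 0 with rfl | hz
  · simp [radialMap_zero]
  simp only [radialMap, sub_div, div_self (norm_ne_zero_iff.2 hz), sub_smul, one_smul]

/-- With `s = ‖z‖`, `t = ‖z'‖` and `c` the cosine of the angle between `z` and `z'`, the claim
reads `(ψ s - ψ t)² + 2 ψ s ψ t (1 - c) ≤ (s - t)² + 2 s t (1 - c)`. -/
theorem lipschitzWith_radialMap (hψ : LipschitzOnWith 1 ψ (Ici 0))
    (hψ₀ : ∀ t, 0 ≤ t → 0 ≤ ψ t) (hψ₁ : ∀ t, 0 ≤ t → ψ t ≤ t) :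
    LipschitzWith 1 (radialMap ψ : F → F) := by
  have hψ0 : ψ 0 = 0 := le_antisymm (hψ₁ 0 le_rfl) (hψ₀ 0 le_rfl)
  have norm_eq (z : F) : ‖radialMap ψ z‖ = ψ ‖z‖ := by
    rw [norm_radialMap hψ0, abs_of_nonneg (hψ₀ _ (norm_nonneg _))]
  refine LipschitzWith.of_dist_le_mul fun z z' => ?_
  rw [NNReal.coe_one, one_mul, dist_eq_norm, dist_eq_norm]
  rcases eq_or_ne z 0 with rfl | hz
  · rw [radialMap_zero, zero_sub, zero_sub, norm_neg, norm_neg, norm_eq]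
    exact hψ₁ _ (norm_nonneg _)
  rcases eq_or_ne z' 0 with rfl | hz'
  · rw [radialMap_zero, sub_zero, sub_zero, norm_eq]
    exact hψ₁ _ (norm_nonneg _)
  set s := ‖z‖
  set t := ‖z'‖
  have hs : 0 < s := norm_pos_iff.2 hz
  have ht : 0 < t := norm_pos_iff.2 hz'
  set p := inner ℝ z z'
  have hc : p / (s * t) ≤ 1 := (div_le_one (by positivity)).2 (real_inner_le_norm z z')
  have hlhs : ‖radialMap ψ z - radialMap ψ z'‖ ^ 2 =
      ψ s ^ 2 + ψ t ^ 2 - 2 * (ψ s * ψ t) * (p / (s * t)) := by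
    rw [norm_sub_sq_real, norm_eq, norm_eq, radialMap, radialMap, real_inner_smul_left,
      real_inner_smul_right]
    field_simp
    ring
  have hrhs : ‖z - z'‖ ^ 2 = s ^ 2 + t ^ 2 - 2 * (s * t) * (p / (s * t)) := by
    rw [norm_sub_sq_real]
    field_simp
    ring
  have hlip : |ψ s - ψ t| ≤ |s - t| := by
    simpa [Real.dist_eq] using hψ.dist_le_mul s (mem_Ici.2 hs.le) t (mem_Ici.2 ht.le)
  have hprod : ψ s * ψ t ≤ s * t :=
    mul_le_mul (hψ₁ s hs.le) (hψ₁ t ht.le) (hψ₀ t ht.le) hs.le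
  refine (pow_le_pow_iff_left₀ (norm_nonneg _) (norm_nonneg _) two_ne_zero).1 ?_
  rw [hlhs, hrhs]
  nlinarith [sq_le_sq.2 hlip, mul_nonneg (sub_nonneg.2 hc) (sub_nonneg.2 hprod)]

theorem lipschitzWith_radialMap_foldProfile (r : ℝ) :
    LipschitzWith 1 (radialMap (foldProfile r) : F → F) :=
  lipschitzWith_radialMap (lipschitzWith_foldProfile r).lipschitzOnWith
    (fun _ => foldProfile_nonneg) fun _ _ => foldProfile_le_self

theorem differentiableAt_radialMap_foldProfile {r : ℝ} (h₁ : ‖z‖ ≠ r) (h₂ : ‖z‖ ≠ 2 * r) :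
    DifferentiableAt ℝ (radialMap (foldProfile r)) z := by
  rcases h₁.lt_or_gt with h₁ | h₁
  · have hloc : radialMap (foldProfile r) =ᶠ[𝓝 z] id := by
      filter_upwards [(isOpen_lt continuous_norm continuous_const).mem_nhds h₁] with y hy
      exact radialMap_eq_self (foldProfile_of_le hy.le)
    exact hloc.differentiableAt_iff.2 differentiableAt_id
  rcases h₂.lt_or_gt with h₂ | h₂
  · have hz : z ≠ 0 := norm_pos_iff.1 (by linarith [norm_nonneg z])
    have hloc : radialMap (foldProfile r) =ᶠ[𝓝 z] fun y => ((2 * r - ‖y‖) * ‖y‖⁻¹) • y := by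
      filter_upwards [(isOpen_lt continuous_const continuous_norm).mem_nhds h₁,
        (isOpen_lt continuous_norm continuous_const).mem_nhds h₂] with y hy₁ hy₂
      rw [radialMap, foldProfile_of_mem_Icc hy₁.le hy₂.le, div_eq_mul_inv]
    have hnorm : DifferentiableAt ℝ (‖·‖) z :=
      (contDiffAt_norm ℝ hz).differentiableAt one_ne_zero
    have hcoef : DifferentiableAt ℝ (fun y : F => (2 * r - ‖y‖) * ‖y‖⁻¹) z :=
      ((differentiableAt_const _).sub hnorm).mul (hnorm.inv (norm_ne_zero_iff.2 hz))
    exact hloc.differentiableAt_iff.2 (hcoef.smul differentiableAt_id)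
  · have hloc : radialMap (foldProfile r) =ᶠ[𝓝 z] fun _ => (0 : F) := by
      filter_upwards [(isOpen_lt continuous_const continuous_norm).mem_nhds h₂] with y hy
      rw [radialMap, foldProfile_of_two_mul_le hy.le (norm_nonneg y), zero_div, zero_smul]
    exact hloc.differentiableAt_iff.2 (differentiableAt_const _)

end RadialMap

section RadialReplacement

variable {E F : Type*} [NormedAddCommGroup F] [InnerProductSpace ℝ F]

open Classical in
noncomputable def radialReplacement (A : Set E) (u : E → F) (a : F) (r : ℝ) : E → F :=
  A.piecewise (fun x => a + radialMap (foldProfile r) (u x - a)) u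

variable {A : Set E} {u : E → F} {a : F} {r : ℝ} {x : E}

theorem radialReplacement_of_notMem (hx : x ∉ A) : radialReplacement A u a r x = u x := by
  classical
  simp [radialReplacement, hx]

theorem radialReplacement_of_mem (hx : x ∈ A) :
    radialReplacement A u a r x = a + radialMap (foldProfile r) (u x - a) := by
  classical
  simp [radialReplacement, hx]

theorem radialReplacement_of_norm_le (h : ‖u x - a‖ ≤ r) :
    radialReplacement A u a r x = u x := by
  by_cases hx : x ∈ A
  · rw [radialReplacement_of_mem hx, radialMap_eq_self (foldProfile_of_le h), add_sub_cancel]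
  · exact radialReplacement_of_notMem hx

theorem radialReplacement_eq_center (hx : x ∈ A) (h : 2 * r ≤ ‖u x - a‖) :
    radialReplacement A u a r x = a := by
  rw [radialReplacement_of_mem hx, radialMap, foldProfile_of_two_mul_le h (norm_nonneg _),
    zero_div, zero_smul, add_zero]

theorem norm_radialReplacement_sub_center (hx : x ∈ A) :
    ‖radialReplacement A u a r x - a‖ = foldProfile r ‖u x - a‖ := by
  rw [radialReplacement_of_mem hx, add_sub_cancel_left, norm_radialMap foldProfile_zero,
    abs_of_nonneg (foldProfile_nonneg (norm_nonneg _))]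

theorem norm_radialReplacement_sub_center_le (hr : 0 ≤ r) (hx : x ∈ A) :
    ‖radialReplacement A u a r x - a‖ ≤ r :=
  (norm_radialReplacement_sub_center hx).trans_le (foldProfile_le hr)

theorem norm_radialReplacement_sub_le (x : E) :
    ‖radialReplacement A u a r x - u x‖ ≤ 2 * |‖u x - a‖ - r| := by
  by_cases hx : x ∈ A
  · rw [radialReplacement_of_mem hx, show ∀ v : F, a + v - u x = v - (u x - a) by
      intro v; abel, radialMap_sub_self, norm_radialMap (by simp [foldProfile_zero])]
    exact abs_foldProfile_sub_self_le (norm_nonneg _)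
  · rw [radialReplacement_of_notMem hx, sub_self, norm_zero]
    positivity

theorem eq_radialReplacement {w : E → F} {α : ℝ → ℝ} (hr : 0 < r)
    (hα₂ : ∀ τ, r ≤ τ → τ ≤ 2 * r → α τ = (2 * r - τ) / r)
    (hα₃ : ∀ τ, 2 * r ≤ τ → α τ = 0)
    (hw : ∀ x,
      (x ∈ A ∧ r < ‖u x - a‖ → w x = a + (r * α ‖u x - a‖ / ‖u x - a‖) • (u x - a)) ∧
      (¬(x ∈ A ∧ r < ‖u x - a‖) → w x = u x)) :
    w = radialReplacement A u a r := by
  funext x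
  by_cases hx : x ∈ A ∧ r < ‖u x - a‖
  · have hα : r * α ‖u x - a‖ = foldProfile r ‖u x - a‖ := by
      rcases le_total ‖u x - a‖ (2 * r) with h | h
      · rw [hα₂ _ hx.2.le h, foldProfile_of_mem_Icc hx.2.le h]
        field_simp
      · rw [hα₃ _ h, foldProfile_of_two_mul_le h (norm_nonneg _), mul_zero]
    rw [(hw x).1 hx, radialReplacement_of_mem hx.1, radialMap, hα]
  · rw [(hw x).2 hx]
    by_cases hxA : x ∈ A
    · exact (radialReplacement_of_norm_le (not_lt.1 fun h => hx ⟨hxA, h⟩)).symm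
    · exact (radialReplacement_of_notMem hxA).symm

variable [NormedAddCommGroup E] {Ω : Set E}

theorem eventually_norm_radialReplacement_sub_le (hA : IsOpen A)
    (hbdry : ∀ x ∈ frontier A ∩ Ω, ‖u x - a‖ ≤ r) (hxΩ : x ∈ Ω) :
    ∀ᶠ y in 𝓝 x, ‖radialReplacement A u a r y - radialReplacement A u a r x‖ ≤ ‖u y - u x‖ := by
  have hfold {y : E} (hy : y ∈ A)
      (hx : radialReplacement A u a r x = a + radialMap (foldProfile r) (u x - a)) :
      ‖radialReplacement A u a r y - radialReplacement A u a r x‖ ≤ ‖u y - u x‖ := by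
    rw [radialReplacement_of_mem hy, hx, add_sub_add_left_eq_sub, ← dist_eq_norm,
      ← dist_eq_norm, ← dist_sub_right (u y) (u x) a]
    simpa using (lipschitzWith_radialMap_foldProfile r).dist_le_mul (u y - a) (u x - a)
  by_cases hxA : x ∈ A
  · filter_upwards [hA.mem_nhds hxA] with y hy
    exact hfold hy (radialReplacement_of_mem hxA)
  by_cases hx : ‖u x - a‖ ≤ r
  · refine Eventually.of_forall fun y => ?_
    by_cases hy : y ∈ A
    · refine hfold hy ?_
      rw [radialReplacement_of_norm_le hx, radialMap_eq_self (foldProfile_of_le hx),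
        add_sub_cancel]
    · rw [radialReplacement_of_notMem hy, radialReplacement_of_notMem hxA]
  · filter_upwards [eventually_notMem_of_notMem_frontier hA hxA
      fun hfr => hx (hbdry x ⟨hfr, hxΩ⟩)] with y hy
    rw [radialReplacement_of_notMem hy, radialReplacement_of_notMem hxA]

theorem continuousOn_radialReplacement (hΩ : IsOpen Ω) (hA : IsOpen A)
    (hbdry : ∀ x ∈ frontier A ∩ Ω, ‖u x - a‖ ≤ r) (hu : ContinuousOn u Ω) :
    ContinuousOn (radialReplacement A u a r) Ω := fun x hx =>
  (continuousAt_of_eventually_norm_sub_le ((hu x hx).continuousAt (hΩ.mem_nhds hx))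
    (eventually_norm_radialReplacement_sub_le hA hbdry hx)).continuousWithinAt

variable [NormedSpace ℝ E]

theorem differentiableAt_radialReplacement (hΩ : IsOpen Ω) (hA : IsOpen A)
    (hbdry : ∀ x ∈ frontier A ∩ Ω, ‖u x - a‖ ≤ r) (hu : DifferentiableOn ℝ u Ω) (hxΩ : x ∈ Ω)
    (h₁ : ‖u x - a‖ ≠ r) (h₂ : x ∈ A → ‖u x - a‖ ≠ 2 * r) :
    DifferentiableAt ℝ (radialReplacement A u a r) x := by
  have hux := hu.differentiableAt (hΩ.mem_nhds hxΩ)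
  by_cases hxA : x ∈ A
  · have hloc : radialReplacement A u a r =ᶠ[𝓝 x]
        fun y => a + radialMap (foldProfile r) (u y - a) := by
      filter_upwards [hA.mem_nhds hxA] with y hy using radialReplacement_of_mem hy
    refine hloc.differentiableAt_iff.2 (DifferentiableAt.const_add a ?_)
    exact (differentiableAt_radialMap_foldProfile h₁ (h₂ hxA)).comp x (hux.sub_const a)
  suffices hloc : radialReplacement A u a r =ᶠ[𝓝 x] u from hloc.differentiableAt_iff.2 hux
  rcases h₁.lt_or_gt with h | h
  · filter_upwards [(hux.continuousAt.sub continuousAt_const).norm.eventually (gt_mem_nhds h)]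
      with y hy using radialReplacement_of_norm_le hy.le
  · filter_upwards [eventually_notMem_of_notMem_frontier hA hxA
      fun hfr => (hbdry x ⟨hfr, hxΩ⟩).not_gt h] with y hy using radialReplacement_of_notMem hy

theorem ae_differentiableAt_radialReplacement [MeasurableSpace E] [BorelSpace E]
    [FiniteDimensional ℝ E] (μ : Measure E) [μ.IsAddHaarMeasure] (hΩ : IsOpen Ω)
    (hA : IsOpen A) (hAΩ : A ⊆ Ω) (hu : DifferentiableOn ℝ u Ω)
    (hbdry : ∀ x ∈ frontier A ∩ Ω, ‖u x - a‖ ≤ r) (hr : 0 < r) :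
    ∀ᵐ x ∂μ.restrict Ω, DifferentiableAt ℝ (radialReplacement A u a r) x := by
  set ρ : E → ℝ := fun x => ‖u x - a‖
  have hρ : ContinuousOn ρ Ω := (hu.continuousOn.sub continuousOn_const).norm
  have hdiff {x : E} (hx : x ∈ Ω) : DifferentiableAt ℝ u x :=
    hu.differentiableAt (hΩ.mem_nhds hx)
  have hρdiff {x : E} (hx : x ∈ Ω) (hρx : 0 < ρ x) : DifferentiableAt ℝ ρ x :=
    ((hdiff hx).sub_const a).norm ℝ (norm_pos_iff.1 hρx)
  have hinner := ae_differentiableAt_of_norm_sub_le_levelSet μ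
    (hρ.measurableSet_inter_preimage hΩ (measurableSet_singleton r))
    (g := radialReplacement A u a r) (C := 2)
    (fun x hx => hdiff hx.1) (fun x hx => hρdiff hx.1 (hx.2.symm ▸ hr)) (fun x hx => hx.2)
    (fun x hx => radialReplacement_of_norm_le hx.2.le)
    (fun _ _ => Eventually.of_forall norm_radialReplacement_sub_le)
  have houter := ae_differentiableAt_of_norm_sub_le_levelSet μ
    ((hρ.mono hAΩ).measurableSet_inter_preimage hA (measurableSet_singleton (2 * r)))
    (g := radialReplacement A u a r) (h := fun _ => a) (C := 1)
    (fun _ _ => differentiableAt_const a)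
    (fun x hx => hρdiff (hAΩ hx.1) (hx.2.symm ▸ by positivity)) (fun x hx => hx.2)
    (fun x hx => radialReplacement_eq_center hx.1 hx.2.ge) fun x hx => by
      filter_upwards [hA.mem_nhds hx.1] with y hy
      rw [one_mul, norm_radialReplacement_sub_center hy]
      exact foldProfile_le_abs_sub (norm_nonneg _)
  rw [ae_restrict_iff' hΩ.measurableSet]
  filter_upwards [hinner, houter] with x hx₁ hx₂ hxΩ
  by_cases e₁ : ρ x = r
  · exact hx₁ ⟨hxΩ, e₁⟩
  by_cases e₂ : x ∈ A ∧ ρ x = 2 * r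
  · exact hx₂ e₂
  exact differentiableAt_radialReplacement hΩ hA hbdry hu hxΩ e₁ fun hxA h => e₂ ⟨hxA, h⟩

end RadialReplacement

section HilbertSchmidt

variable {n m : ℕ}

theorem hsNorm_nonneg (L : EuclideanSpace ℝ (Fin n) →L[ℝ] EuclideanSpace ℝ (Fin m)) :
    0 ≤ hsNorm L :=
  Real.sqrt_nonneg _

theorem hsNorm_zero :
    hsNorm (0 : EuclideanSpace ℝ (Fin n) →L[ℝ] EuclideanSpace ℝ (Fin m)) = 0 := by
  simp [hsNorm]

theorem hsNorm_le_hsNorm {L M : EuclideanSpace ℝ (Fin n) →L[ℝ] EuclideanSpace ℝ (Fin m)}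
    (h : ∀ v, ‖L v‖ ≤ ‖M v‖) : hsNorm L ≤ hsNorm M :=
  Real.sqrt_le_sqrt (Finset.sum_le_sum fun _ _ => pow_le_pow_left₀ (norm_nonneg _) (h _) 2)

theorem continuous_hsNorm :
    Continuous (hsNorm : (EuclideanSpace ℝ (Fin n) →L[ℝ] EuclideanSpace ℝ (Fin m)) → ℝ) := by
  unfold hsNorm
  fun_prop

theorem measurable_hsNorm_fderiv_sq (v : EuclideanSpace ℝ (Fin n) → EuclideanSpace ℝ (Fin m)) :
    Measurable fun x => hsNorm (fderiv ℝ v x) ^ 2 :=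
  (continuous_hsNorm.measurable.comp (measurable_fderiv ℝ v)).pow_const 2

theorem hsNorm_fderiv_radialReplacement_le {Ω A : Set (EuclideanSpace ℝ (Fin n))}
    {u : EuclideanSpace ℝ (Fin n) → EuclideanSpace ℝ (Fin m)} {a : EuclideanSpace ℝ (Fin m)}
    {r : ℝ} {x : EuclideanSpace ℝ (Fin n)} (hΩ : IsOpen Ω) (hA : IsOpen A)
    (hbdry : ∀ x ∈ frontier A ∩ Ω, ‖u x - a‖ ≤ r) (hu : DifferentiableOn ℝ u Ω) (hx : x ∈ Ω) :
    hsNorm (fderiv ℝ (radialReplacement A u a r) x) ≤ hsNorm (fderiv ℝ u x) := by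
  by_cases hw : DifferentiableAt ℝ (radialReplacement A u a r) x
  · exact hsNorm_le_hsNorm (norm_fderiv_apply_le_of_eventually_norm_sub_le hw
      (hu.differentiableAt (hΩ.mem_nhds hx)) (eventually_norm_radialReplacement_sub_le hA hbdry hx))
  · rw [fderiv_zero_of_not_differentiableAt hw, hsNorm_zero]
    exact hsNorm_nonneg _

end HilbertSchmidt

namespace HypH

variable {n m : ℕ} {W : EuclideanSpace ℝ (Fin m) → ℝ} {a z : EuclideanSpace ℝ (Fin m)} {r₀ r : ℝ}
  {A : Set (EuclideanSpace ℝ (Fin n))} {u : EuclideanSpace ℝ (Fin n) → EuclideanSpace ℝ (Fin m)}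

theorem nonneg (hH : HypH W a r₀) (z : EuclideanSpace ℝ (Fin m)) : 0 ≤ W z :=
  hH.1 ▸ hH.2.1 z

theorem apply_add_smul_lt (hH : HypH W a r₀) {s : ℝ} (hs : 0 ≤ s) (hsz : s < ‖z‖)
    (hz : ‖z‖ < r₀) : W (a + (s / ‖z‖) • z) < W (a + z) := by
  have hz0 : z ≠ 0 := norm_pos_iff.1 (hs.trans_lt hsz)
  have := hH.2.2 _ (norm_smul_inv_norm (𝕜 := ℝ) hz0) ⟨hs, hsz.trans hz⟩ ⟨norm_nonneg z, hz⟩ hsz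
  simpa [smul_smul, div_eq_mul_inv, mul_inv_cancel₀ (norm_ne_zero_iff.2 hz0)] using this

theorem apply_add_radialMap_le (hH : HypH W a r₀) (hr : 2 * r < r₀) (z) :
    W (a + radialMap (foldProfile r) z) ≤ W (a + z) := by
  rcases le_or_gt (2 * r) ‖z‖ with h | h
  · rw [radialMap, foldProfile_of_two_mul_le h (norm_nonneg _), zero_div, zero_smul, add_zero]
    exact hH.2.1 _
  rcases foldProfile_le_self.lt_or_eq with hlt | heq
  · exact (hH.apply_add_smul_lt (foldProfile_nonneg (norm_nonneg _)) hlt (h.trans hr)).le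
  · rw [radialMap_eq_self heq]

theorem apply_add_radialMap_lt (hH : HypH W a r₀) (hr : 2 * r < r₀) (h₁ : r < ‖z‖)
    (h₂ : ‖z‖ < 2 * r) : W (a + radialMap (foldProfile r) z) < W (a + z) := by
  have hψ := foldProfile_of_mem_Icc h₁.le h₂.le
  exact hH.apply_add_smul_lt (by rw [hψ]; linarith) (by rw [hψ]; linarith) (h₂.trans hr)

theorem apply_radialReplacement_le (hH : HypH W a r₀) (hr : 2 * r < r₀) (x) :
    W (radialReplacement A u a r x) ≤ W (u x) := by
  by_cases hx : x ∈ A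
  · simpa [radialReplacement_of_mem hx] using hH.apply_add_radialMap_le hr (u x - a)
  · rw [radialReplacement_of_notMem hx]

theorem apply_radialReplacement_lt (hH : HypH W a r₀) (hr : 2 * r < r₀) {x}
    (hx : x ∈ A) (h₁ : r < ‖u x - a‖) (h₂ : ‖u x - a‖ < 2 * r) :
    W (radialReplacement A u a r x) < W (u x) := by
  simpa [radialReplacement_of_mem hx] using hH.apply_add_radialMap_lt hr h₁ h₂

theorem integral_apply_radialReplacement_lt (hH : HypH W a r₀) (hr : 2 * r < r₀)
    {Ω : Set (EuclideanSpace ℝ (Fin n))} (hAΩ : A ⊆ Ω)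
    (hWw : IntegrableOn (fun x => W (radialReplacement A u a r x)) Ω)
    (hWu : IntegrableOn (fun x => W (u x)) Ω)
    (hpos : 0 < volume {x ∈ A | r < ‖u x - a‖ ∧ ‖u x - a‖ < 2 * r} ∨
      0 < ∫ x in {x ∈ A | 2 * r < ‖u x - a‖}, W (u x)) :
    ∫ x in Ω, W (radialReplacement A u a r x) < ∫ x in Ω, W (u x) := by
  have hle : ∀ᵐ x ∂volume.restrict Ω, W (radialReplacement A u a r x) ≤ W (u x) :=
    ae_of_all _ (hH.apply_radialReplacement_le hr)
  rcases hpos with hmid | hout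
  · exact setIntegral_lt_setIntegral_of_lt_on hWw hWu hle (fun x hx => hAΩ hx.1)
      (fun x hx => hH.apply_radialReplacement_lt hr hx.1 hx.2.1 hx.2.2) hmid
  have hsupp := (setIntegral_pos_iff_support_of_nonneg_ae (ae_of_all _ fun x => hH.nonneg (u x))
    (hWu.mono_set fun x hx => hAΩ hx.1)).1 hout
  refine setIntegral_lt_setIntegral_of_lt_on hWw hWu hle (fun x hx => hAΩ hx.2.1)
    (fun x hx => ?_) hsupp
  rw [radialReplacement_eq_center hx.2.1 hx.2.2.le, hH.1]
  exact (hH.nonneg _).lt_of_ne' hx.1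

end HypH

section Energy

variable {n m : ℕ} {Ω : Set (EuclideanSpace ℝ (Fin n))} {W : EuclideanSpace ℝ (Fin m) → ℝ}
  {v : EuclideanSpace ℝ (Fin n) → EuclideanSpace ℝ (Fin m)}

theorem energy_eq_add (hD : IntegrableOn (fun x => hsNorm (fderiv ℝ v x) ^ 2) Ω)
    (hW : IntegrableOn (fun x => W (v x)) Ω) :
    energy Ω W v = 1 / 2 * (∫ x in Ω, hsNorm (fderiv ℝ v x) ^ 2) + ∫ x in Ω, W (v x) := by
  rw [energy, integral_add (hD.const_mul _) hW, integral_const_mul]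

theorem integrableOn_of_integrableOn_energy (hW₀ : ∀ z, 0 ≤ W z)
    (hWv : AEStronglyMeasurable (fun x => W (v x)) (volume.restrict Ω))
    (hfin : IntegrableOn (fun x => 1 / 2 * hsNorm (fderiv ℝ v x) ^ 2 + W (v x)) Ω) :
    IntegrableOn (fun x => hsNorm (fderiv ℝ v x) ^ 2) Ω ∧ IntegrableOn (fun x => W (v x)) Ω := by
  refine ⟨(hfin.const_mul 2).mono' (measurable_hsNorm_fderiv_sq v).aestronglyMeasurable
    (ae_of_all _ fun x => ?_), hfin.mono' hWv (ae_of_all _ fun x => ?_)⟩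
  · rw [Real.norm_of_nonneg (sq_nonneg _)]
    linarith [hW₀ (v x)]
  · rw [Real.norm_of_nonneg (hW₀ _)]
    linarith [sq_nonneg (hsNorm (fderiv ℝ v x))]

end Energy

theorem replacement_radial_reflection_general
    {n m : ℕ} (Ω A : Set (EuclideanSpace ℝ (Fin n)))
    (hΩopen : IsOpen Ω)
    (hAopen : IsOpen A) (hAsub : A ⊆ Ω)
    (W : EuclideanSpace ℝ (Fin m) → ℝ) (a : EuclideanSpace ℝ (Fin m)) (r₀ r : ℝ)
    (hWC1 : ContDiff ℝ 1 W) (hWnonneg : ∀ v, 0 ≤ W v)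
    (hH : HypH W a r₀)
    (hr : 0 < r) (hrr₀ : 2 * r < r₀)
    (u : EuclideanSpace ℝ (Fin n) → EuclideanSpace ℝ (Fin m))
    (huC1 : ContDiffOn ℝ 1 u Ω)
    (hfin : IntegrableOn
      (fun x => (1 / 2 : ℝ) * hsNorm (fderiv ℝ u x) ^ 2 + W (u x)) Ω volume)
    (hbdry : ∀ x ∈ frontier A ∩ Ω, ‖u x - a‖ ≤ r)
    (α : ℝ → ℝ)
    (hα₂ : ∀ τ, r ≤ τ → τ ≤ 2 * r → α τ = (2 * r - τ) / r)
    (hα₃ : ∀ τ, 2 * r ≤ τ → α τ = 0)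
    (w : EuclideanSpace ℝ (Fin n) → EuclideanSpace ℝ (Fin m))
    (hw : ∀ x,
      (x ∈ A ∧ r < ‖u x - a‖ →
        w x = a + (r * α ‖u x - a‖ / ‖u x - a‖) • (u x - a)) ∧
      (¬(x ∈ A ∧ r < ‖u x - a‖) → w x = u x)) :
    (∀ x ∈ Ω \ A, w x = u x) ∧
    (∀ x ∈ A, ‖w x - a‖ ≤ r) ∧
    DiffAEOn Ω w ∧
    (∫ x in Ω, hsNorm (fderiv ℝ w x) ^ 2) ≤ (∫ x in Ω, hsNorm (fderiv ℝ u x) ^ 2) ∧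
    (∫ x in Ω, W (w x)) ≤ (∫ x in Ω, W (u x)) ∧
    ((0 < volume {x ∈ A | r < ‖u x - a‖ ∧ ‖u x - a‖ < 2 * r} ∨
      0 < ∫ x in {x ∈ A | 2 * r < ‖u x - a‖}, W (u x)) →
      energy Ω W w < energy Ω W u) := by
  obtain rfl : w = radialReplacement A u a r := eq_radialReplacement hr hα₂ hα₃ hw
  have hu : DifferentiableOn ℝ u Ω := huC1.differentiableOn one_ne_zero
  have hΩ := hΩopen.measurableSet
  obtain ⟨hDu, hWu⟩ := integrableOn_of_integrableOn_energy hWnonneg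
    ((hWC1.continuous.comp_continuousOn hu.continuousOn).aestronglyMeasurable hΩ) hfin
  have hDle : ∀ x ∈ Ω, hsNorm (fderiv ℝ (radialReplacement A u a r) x) ^ 2 ≤
      hsNorm (fderiv ℝ u x) ^ 2 := fun x hx => pow_le_pow_left₀ (hsNorm_nonneg _)
    (hsNorm_fderiv_radialReplacement_le hΩopen hAopen hbdry hu hx) 2
  have hWle := hH.apply_radialReplacement_le (A := A) (u := u) hrr₀
  have hDw : IntegrableOn (fun x => hsNorm (fderiv ℝ (radialReplacement A u a r) x) ^ 2) Ω :=
    hDu.mono' (measurable_hsNorm_fderiv_sq _).aestronglyMeasurable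
      (ae_restrict_of_forall_mem hΩ fun x hx =>
        (Real.norm_of_nonneg (sq_nonneg _)).trans_le (hDle x hx))
  have hWw : IntegrableOn (fun x => W (radialReplacement A u a r x)) Ω :=
    hWu.mono' ((hWC1.continuous.comp_continuousOn (continuousOn_radialReplacement hΩopen hAopen
      hbdry hu.continuousOn)).aestronglyMeasurable hΩ)
      (ae_of_all _ fun x => (Real.norm_of_nonneg (hWnonneg _)).trans_le (hWle x))
  have hDint := setIntegral_mono_on hDw hDu hΩ hDle
  refine ⟨fun x hx => radialReplacement_of_notMem hx.2,
    fun x hx => norm_radialReplacement_sub_center_le hr.le hx,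
    ae_differentiableAt_radialReplacement volume hΩopen hAopen hAsub hu hbdry hr, hDint,
    setIntegral_mono hWw hWu hWle, fun hpos => ?_⟩
  rw [energy_eq_add hDw hWw, energy_eq_add hDu hWu]
  linarith [hH.integral_apply_radialReplacement_lt hrr₀ hAsub hWw hWu hpos]

theorem replacement_radial_reflection
    {n m : ℕ} (Ω A : Set (EuclideanSpace ℝ (Fin n)))
    (hΩopen : IsOpen Ω) (hΩbdd : Bornology.IsBounded Ω) (hΩconn : IsConnected Ω)
    (hΩlip : HasLipschitzBoundary Ω)
    (hAopen : IsOpen A) (hAsub : A ⊆ Ω) (hAlip : HasLipschitzBoundary A)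
    (hAfr : (frontier A).Nonempty)
    (W : EuclideanSpace ℝ (Fin m) → ℝ) (a : EuclideanSpace ℝ (Fin m)) (r₀ r : ℝ)
    (hWC1 : ContDiff ℝ 1 W) (hWnonneg : ∀ v, 0 ≤ W v)
    (hr₀ : 0 < r₀) (hH : HypH W a r₀)
    (hr : 0 < r) (hrr₀ : 2 * r < r₀)
    (u : EuclideanSpace ℝ (Fin n) → EuclideanSpace ℝ (Fin m))
    (huC1 : ContDiffOn ℝ 1 u Ω)
    (hfin : IntegrableOn
      (fun x => (1 / 2 : ℝ) * hsNorm (fderiv ℝ u x) ^ 2 + W (u x)) Ω volume)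
    (hbdry : ∀ x ∈ frontier A ∩ Ω, ‖u x - a‖ ≤ r)
    (α : ℝ → ℝ)
    (hα₁ : ∀ τ, 0 ≤ τ → τ ≤ r → α τ = 1)
    (hα₂ : ∀ τ, r ≤ τ → τ ≤ 2 * r → α τ = (2 * r - τ) / r)
    (hα₃ : ∀ τ, 2 * r ≤ τ → α τ = 0)
    (w : EuclideanSpace ℝ (Fin n) → EuclideanSpace ℝ (Fin m))
    (hw : ∀ x,
      (x ∈ A ∧ r < ‖u x - a‖ →
        w x = a + (r * α ‖u x - a‖ / ‖u x - a‖) • (u x - a)) ∧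
      (¬(x ∈ A ∧ r < ‖u x - a‖) → w x = u x)) :
    (∀ x ∈ Ω \ A, w x = u x) ∧
    (∀ x ∈ A, ‖w x - a‖ ≤ r) ∧
    DiffAEOn Ω w ∧
    (∫ x in Ω, hsNorm (fderiv ℝ w x) ^ 2) ≤ (∫ x in Ω, hsNorm (fderiv ℝ u x) ^ 2) ∧
    (∫ x in Ω, W (w x)) ≤ (∫ x in Ω, W (u x)) ∧
    ((0 < volume {x ∈ A | r < ‖u x - a‖ ∧ ‖u x - a‖ < 2 * r} ∨
      0 < ∫ x in {x ∈ A | 2 * r < ‖u x - a‖}, W (u x)) →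
      energy Ω W w < energy Ω W u) :=
  replacement_radial_reflection_general Ω A hΩopen hAopen hAsub W a r₀ r hWC1 hWnonneg hH hr hrr₀ u
    huC1 hfin hbdry α hα₂ hα₃ w hw
end

section
/- Let a ∈ ℝᵐ, r > 0, and let u be a map from an open subset of ℝⁿ to ℝᵐ differentiable at a point x with r < |u(x) − a| < 2r. Define ρ = |u − a|, n = (u − a)/|u − a|, and w = a + (2r − ρ)·n on a neighborhood of x. Then w is differentiable at x and ‖Dw(x)‖² = |∇ρ(x)|² + (2r − ρ(x))²·‖Dn(x)‖² ≤ |∇ρ(x)|² + ρ(x)²·‖Dn(x)‖² = ‖Du(x)‖², where ‖·‖ denotes the Hilbert–Schmidt (Frobenius) norm. -/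
/-!
Write `u - a = ρ • ν` with `ν` a unit vector field near `x`. For any scalar `f`, the
derivative of `a + f • ν` is `Df ⊗ ν + f • Dν`, and the two summands are orthogonal in every
direction because differentiating `‖ν‖² = 1` gives `⟪ν, Dν⟫ = 0`; hence
`‖D(a + f • ν)‖² = ‖Df‖² + f² ‖Dν‖²`. Taking `f = ρ` gives `‖Du‖²`, taking `f = 2r - ρ` gives
`‖Dw‖²`, and `|2r - ρ| ≤ ρ` because `0 < r < ρ`.
-/

open MeasureTheory Set

open Filter Topology InnerProductSpace

lemma hsNorm_sq {n m : ℕ} (L : EuclideanSpace ℝ (Fin n) →L[ℝ] EuclideanSpace ℝ (Fin m)) :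
    hsNorm L ^ 2 = ∑ i : Fin n, ‖L (EuclideanSpace.single i 1)‖ ^ 2 :=
  Real.sq_sqrt (Finset.sum_nonneg fun _ _ => sq_nonneg _)

lemma sum_sq_apply_single_eq_norm_sq {ι : Type*} [Fintype ι] [DecidableEq ι]
    (L : StrongDual ℝ (EuclideanSpace ℝ ι)) :
    ∑ i, L (EuclideanSpace.single i 1) ^ 2 = ‖L‖ ^ 2 := by
  obtain ⟨g, rfl⟩ := (toDual ℝ (EuclideanSpace ℝ ι)).surjective L
  simp [EuclideanSpace.norm_sq_eq, EuclideanSpace.inner_single_right]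

lemma norm_smul_inv_norm_smul_self {F : Type*} [NormedAddCommGroup F] [NormedSpace ℝ F]
    (v : F) : ‖v‖ • ‖v‖⁻¹ • v = v := by
  rcases eq_or_ne v 0 with rfl | hv
  · simp
  · rw [smul_smul, mul_inv_cancel₀ (norm_ne_zero_iff.2 hv), one_smul]

section

variable {E F : Type*} [NormedAddCommGroup E] [NormedSpace ℝ E]
  [NormedAddCommGroup F] [InnerProductSpace ℝ F] {x : E}

lemma inner_fderiv_apply_eq_zero_of_eventually_norm_eq {ν : E → F} {c : ℝ}
    (hν : DifferentiableAt ℝ ν x) (hc : ∀ᶠ y in 𝓝 x, ‖ν y‖ = c) (e : E) :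
    ⟪ν x, fderiv ℝ ν x e⟫_ℝ = 0 := by
  have hconst : HasFDerivAt (‖ν ·‖ ^ 2) (0 : E →L[ℝ] ℝ) x :=
    (hasFDerivAt_const (c ^ 2) x).congr_of_eventuallyEq (hc.mono fun y hy => by simp [hy])
  have h := congrArg (· e) (hν.hasFDerivAt.norm_sq.unique hconst)
  simpa using h

lemma norm_sq_smul_add_of_inner_eq_zero {ν z : F} (hν : ‖ν‖ = 1) (hνz : ⟪ν, z⟫_ℝ = 0) (c : ℝ) :
    ‖c • ν + z‖ ^ 2 = c ^ 2 + ‖z‖ ^ 2 := by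
  rw [norm_add_sq_real, real_inner_smul_left, hνz, norm_smul, hν]
  simp

lemma norm_fderiv_smul_apply_sq_of_eventually_norm_eq_one {f : E → ℝ} {ν : E → F}
    (hf : DifferentiableAt ℝ f x) (hν : DifferentiableAt ℝ ν x)
    (hunit : ∀ᶠ y in 𝓝 x, ‖ν y‖ = 1) (e : E) :
    ‖fderiv ℝ (fun y => f y • ν y) x e‖ ^ 2 =
      fderiv ℝ f x e ^ 2 + f x ^ 2 * ‖fderiv ℝ ν x e‖ ^ 2 := by
  have horth : ⟪ν x, f x • fderiv ℝ ν x e⟫_ℝ = 0 := by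
    rw [real_inner_smul_right, inner_fderiv_apply_eq_zero_of_eventually_norm_eq hν hunit, mul_zero]
  rw [fderiv_fun_smul hf hν, add_apply, add_comm]
  simp only [smul_apply, ContinuousLinearMap.smulRight_apply]
  rw [norm_sq_smul_add_of_inner_eq_zero hunit.self_of_nhds horth, norm_smul, mul_pow,
    Real.norm_eq_abs, sq_abs]

end

lemma hsNorm_fderiv_smul_sq_of_eventually_norm_eq_one {n m : ℕ}
    {x : EuclideanSpace ℝ (Fin n)} {f : EuclideanSpace ℝ (Fin n) → ℝ}
    {ν : EuclideanSpace ℝ (Fin n) → EuclideanSpace ℝ (Fin m)}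
    (hf : DifferentiableAt ℝ f x) (hν : DifferentiableAt ℝ ν x)
    (hunit : ∀ᶠ y in 𝓝 x, ‖ν y‖ = 1) :
    hsNorm (fderiv ℝ (fun y => f y • ν y) x) ^ 2 =
      ‖fderiv ℝ f x‖ ^ 2 + f x ^ 2 * hsNorm (fderiv ℝ ν x) ^ 2 := by
  simp only [hsNorm_sq, norm_fderiv_smul_apply_sq_of_eventually_norm_eq_one hf hν hunit,
    Finset.sum_add_distrib, ← Finset.mul_sum, sum_sq_apply_single_eq_norm_sq]

theorem radial_reflection_gradient_bound_general
    {n m : ℕ} (a : EuclideanSpace ℝ (Fin m)) (r : ℝ) (hr : 0 < r)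
    (u : EuclideanSpace ℝ (Fin n) → EuclideanSpace ℝ (Fin m))
    (x : EuclideanSpace ℝ (Fin n))
    (hu : DifferentiableAt ℝ u x)
    (hlow : r < ‖u x - a‖)
    (ρ : EuclideanSpace ℝ (Fin n) → ℝ)
    (hρ : ρ = fun y => ‖u y - a‖)
    (nvec : EuclideanSpace ℝ (Fin n) → EuclideanSpace ℝ (Fin m))
    (hnvec : nvec = fun y => ‖u y - a‖⁻¹ • (u y - a))
    (w : EuclideanSpace ℝ (Fin n) → EuclideanSpace ℝ (Fin m))
    (hw : w = fun y => a + (2 * r - ρ y) • nvec y) :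
    DifferentiableAt ℝ w x ∧
    hsNorm (fderiv ℝ w x) ^ 2 =
      ‖gradient ρ x‖ ^ 2 + (2 * r - ρ x) ^ 2 * hsNorm (fderiv ℝ nvec x) ^ 2 ∧
    hsNorm (fderiv ℝ w x) ^ 2 ≤
      ‖gradient ρ x‖ ^ 2 + ρ x ^ 2 * hsNorm (fderiv ℝ nvec x) ^ 2 ∧
    ‖gradient ρ x‖ ^ 2 + ρ x ^ 2 * hsNorm (fderiv ℝ nvec x) ^ 2 =
      hsNorm (fderiv ℝ u x) ^ 2 := by
  have hux : u x - a ≠ 0 := norm_pos_iff.1 (hr.trans hlow)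
  have hsub : DifferentiableAt ℝ (fun y => u y - a) x := hu.sub_const a
  have hρd : DifferentiableAt ℝ ρ x := hρ ▸ hsub.norm ℝ hux
  have hνd : DifferentiableAt ℝ nvec x :=
    hnvec ▸ ((hsub.norm ℝ hux).inv (norm_ne_zero_iff.2 hux)).smul hsub
  have hunit : ∀ᶠ y in 𝓝 x, ‖nvec y‖ = 1 :=
    hnvec ▸ (hsub.continuousAt.eventually_ne hux).mono fun y hy => norm_smul_inv_norm hy
  have hpolar : u = fun y => a + ρ y • nvec y := by
    subst hρ hnvec
    funext y
    rw [norm_smul_inv_norm_smul_self, add_sub_cancel]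
  have hgrad : ‖gradient ρ x‖ = ‖fderiv ℝ ρ x‖ := by
    rw [← toDual_gradient, LinearIsometryEquiv.norm_map]
  have hw_eq : hsNorm (fderiv ℝ w x) ^ 2 =
      ‖gradient ρ x‖ ^ 2 + (2 * r - ρ x) ^ 2 * hsNorm (fderiv ℝ nvec x) ^ 2 := by
    rw [hw, fderiv_const_add, hsNorm_fderiv_smul_sq_of_eventually_norm_eq_one
      (hρd.const_sub _) hνd hunit, fderiv_const_sub, norm_neg, hgrad]
  have hu_eq : hsNorm (fderiv ℝ u x) ^ 2 =
      ‖gradient ρ x‖ ^ 2 + ρ x ^ 2 * hsNorm (fderiv ℝ nvec x) ^ 2 := by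
    rw [hpolar, fderiv_const_add, hsNorm_fderiv_smul_sq_of_eventually_norm_eq_one hρd hνd hunit,
      hgrad]
  have hρx : r < ρ x := hρ ▸ hlow
  refine ⟨hw ▸ ((hρd.const_sub _).smul hνd).const_add a, hw_eq, ?_, hu_eq.symm⟩
  have hsq : (2 * r - ρ x) ^ 2 ≤ ρ x ^ 2 := sq_le_sq' (by linarith) (by linarith)
  rw [hw_eq]
  gcongr

theorem radial_reflection_gradient_bound
    {n m : ℕ} (a : EuclideanSpace ℝ (Fin m)) (r : ℝ) (hr : 0 < r)
    (u : EuclideanSpace ℝ (Fin n) → EuclideanSpace ℝ (Fin m))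
    (x : EuclideanSpace ℝ (Fin n))
    (hu : DifferentiableAt ℝ u x)
    (hlow : r < ‖u x - a‖) (hhigh : ‖u x - a‖ < 2 * r)
    (ρ : EuclideanSpace ℝ (Fin n) → ℝ)
    (hρ : ρ = fun y => ‖u y - a‖)
    (nvec : EuclideanSpace ℝ (Fin n) → EuclideanSpace ℝ (Fin m))
    (hnvec : nvec = fun y => ‖u y - a‖⁻¹ • (u y - a))
    (w : EuclideanSpace ℝ (Fin n) → EuclideanSpace ℝ (Fin m))
    (hw : w = fun y => a + (2 * r - ρ y) • nvec y) :
    DifferentiableAt ℝ w x ∧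
    hsNorm (fderiv ℝ w x) ^ 2 =
      ‖gradient ρ x‖ ^ 2 + (2 * r - ρ x) ^ 2 * hsNorm (fderiv ℝ nvec x) ^ 2 ∧
    hsNorm (fderiv ℝ w x) ^ 2 ≤
      ‖gradient ρ x‖ ^ 2 + ρ x ^ 2 * hsNorm (fderiv ℝ nvec x) ^ 2 ∧
    ‖gradient ρ x‖ ^ 2 + ρ x ^ 2 * hsNorm (fderiv ℝ nvec x) ^ 2 =
      hsNorm (fderiv ℝ u x) ^ 2 :=
  radial_reflection_gradient_bound_general a r hr u x hu hlow ρ hρ nvec hnvec w hw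
end

section
/- Let r > 0 and w₀ > 0. Let [c, d] ⊂ ℝ be a compact interval with c < d, let f : [c, d] → ℝ be continuously differentiable with |f(d) − f(c)| ≥ r/4, and let g : [c, d] → ℝ be integrable with g(t) ≥ w₀ for all t ∈ [c, d]. Then ∫_c^d ( (1/2) f′(t)² + g(t) ) dt ≥ r·√(w₀) / (2√2). -/
/-!
Instead of Cauchy–Schwarz followed by optimising over the length of the interval, use the
pointwise AM–GM bound `½ a² + w₀ ≥ √(2 w₀) |a|` (the Modica–Mortola trick): integrating it,
the energy dominates `√(2 w₀) ∫ |f'| ≥ √(2 w₀) |f d - f c| ≥ √(2 w₀) r / 4 = r √w₀ / (2 √2)`.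
-/

open MeasureTheory Set

lemma sqrt_two_mul_mul_abs_le_half_sq_add {w x : ℝ} (hw : 0 ≤ w) :
    √(2 * w) * |x| ≤ 1 / 2 * x ^ 2 + w := by
  nlinarith [two_mul_le_add_sq |x| √(2 * w), sq_abs x, Real.sq_sqrt (by positivity : 0 ≤ 2 * w)]

theorem sqrt_two_mul_mul_abs_sub_le_integral {a b w : ℝ} {f f' g : ℝ → ℝ} (hab : a ≤ b)
    (hw : 0 ≤ w) (hf : ∀ t ∈ Icc a b, HasDerivAt f (f' t) t)
    (hint : IntegrableOn (fun t => 1 / 2 * f' t ^ 2 + g t) (Icc a b))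
    (hg : ∀ t ∈ Icc a b, w ≤ g t) :
    √(2 * w) * |f b - f a| ≤ ∫ t in Icc a b, (1 / 2 * f' t ^ 2 + g t) := by
  have hderiv : ∀ t ∈ Icc a b, HasDerivAt (fun s => √(2 * w) * f s) (√(2 * w) * f' t) t :=
    fun t ht => (hf t ht).const_mul _
  have hspeed : ∀ t ∈ Ioo a b, ‖deriv (fun s => √(2 * w) * f s) t‖ ≤ 1 / 2 * f' t ^ 2 + g t := by
    intro t ht
    have ht' := Ioo_subset_Icc_self ht
    rw [(hderiv t ht').deriv, Real.norm_eq_abs, abs_mul, abs_of_nonneg (Real.sqrt_nonneg _)]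
    linarith [sqrt_two_mul_mul_abs_le_half_sq_add (x := f' t) hw, hg t ht']
  have key := norm_sub_le_integral_of_norm_deriv_le_of_le hab
    (fun t ht => (hderiv t ht).continuousAt.continuousWithinAt)
    (fun t ht => (hderiv t (Ioo_subset_Icc_self ht)).differentiableAt.differentiableWithinAt)
    (Filter.Eventually.of_forall hspeed)
    ((intervalIntegrable_iff_integrableOn_Icc_of_le hab).mpr hint)
  rwa [intervalIntegral.integral_of_le hab, ← integral_Icc_eq_integral_Ioc, Real.norm_eq_abs,
    ← mul_sub, abs_mul, abs_of_nonneg (Real.sqrt_nonneg _)] at key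

theorem crossing_lower_bound_general
    (r w₀ c d : ℝ) (hw₀ : 0 < w₀) (hcd : c < d)
    (f f' g : ℝ → ℝ)
    (hf : ∀ t ∈ Set.Icc c d, HasDerivAt f (f' t) t)
    (hf'cont : ContinuousOn f' (Set.Icc c d))
    (hgap : r / 4 ≤ |f d - f c|)
    (hgint : IntegrableOn g (Set.Icc c d) volume)
    (hg : ∀ t ∈ Set.Icc c d, w₀ ≤ g t) :
    r * Real.sqrt w₀ / (2 * Real.sqrt 2) ≤
      ∫ t in Set.Icc c d, ((1 / 2 : ℝ) * f' t ^ 2 + g t) := by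
  have hint : IntegrableOn (fun t => 1 / 2 * f' t ^ 2 + g t) (Icc c d) :=
    (((hf'cont.pow 2).const_smul (1 / 2 : ℝ)).integrableOn_compact isCompact_Icc).add hgint
  calc r * √w₀ / (2 * √2) = √(2 * w₀) * (r / 4) := by
        rw [Real.sqrt_mul zero_le_two, div_eq_iff (by positivity)]
        linear_combination (-(√w₀ * r / 2)) * Real.mul_self_sqrt (zero_le_two : (0 : ℝ) ≤ 2)
    _ ≤ √(2 * w₀) * |f d - f c| := by gcongr
    _ ≤ _ := sqrt_two_mul_mul_abs_sub_le_integral hcd.le hw₀.le hf hint hg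

theorem crossing_lower_bound
    (r w₀ c d : ℝ) (hr : 0 < r) (hw₀ : 0 < w₀) (hcd : c < d)
    (f f' g : ℝ → ℝ)
    (hf : ∀ t ∈ Set.Icc c d, HasDerivAt f (f' t) t)
    (hf'cont : ContinuousOn f' (Set.Icc c d))
    (hgap : r / 4 ≤ |f d - f c|)
    (hgint : IntegrableOn g (Set.Icc c d) volume)
    (hg : ∀ t ∈ Set.Icc c d, w₀ ≤ g t) :
    r * Real.sqrt w₀ / (2 * Real.sqrt 2) ≤
      ∫ t in Set.Icc c d, ((1 / 2 : ℝ) * f' t ^ 2 + g t) :=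
  crossing_lower_bound_general r w₀ c d hw₀ hcd f f' g hf hf'cont hgap hgint hg
end

section
/- Let a ∈ ℝᵐ, r > 0, w₀ > 0, R > 0, and let W : ℝᵐ → ℝ be a nonnegative continuous potential such that W(v) ≥ w₀ whenever |v − a| ≥ r/4. Let γ : [−R, R] → ℝᵐ be continuously differentiable and suppose there exists t* ∈ [−R, R] with |γ(t*) − a| ≥ r/2. Then ∫_{−R}^{R} ( (1/2)|γ′(t)|² + W(γ(t)) ) dt ≥ min( r·√(w₀)/(2√2), 2R·w₀ ). -/
open MeasureTheory Set

/-!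
If the path stays at distance at least `r / 4` from `a`, the potential alone contributes
`2 R w₀`. Otherwise the distance `t ↦ ‖γ t - a‖` climbs from `r / 4` to `r / 2` on an interval
where `W ∘ γ ≥ w₀`; there the pointwise AM-GM bound `√(2 w₀) ‖γ'‖ ≤ ½ ‖γ'‖² + w₀` turns the
energy into at least `√(2 w₀)` times the length of `γ`, which is at least `r / 4`.
-/

open scoped Interval

lemma exists_crossing_uIcc {f : ℝ → ℝ} {x y c : ℝ}
    (hf : ContinuousOn f (uIcc x y)) (hx : f x ≤ c) (hy : c ≤ f y) :
    ∃ z ∈ uIcc x y, f z = c ∧ ∀ t ∈ uIcc z y, c ≤ f t := by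
  have hS : IsCompact (uIcc x y ∩ f ⁻¹' Iic c) :=
    isCompact_uIcc.of_isClosed_subset
      (hf.preimage_isClosed_of_isClosed isCompact_uIcc.isClosed isClosed_Iic) inter_subset_left
  obtain ⟨z, ⟨hz, hzc⟩, hmin⟩ :=
    hS.exists_isMinOn ⟨x, left_mem_uIcc, hx⟩ (f := fun t => |t - y|) (by fun_prop)
  have hsub : uIcc z y ⊆ uIcc x y := uIcc_subset_uIcc hz right_mem_uIcc
  -- `z` is the point of `{f ≤ c}` closest to `y`, so that set meets `[[z, y]]` only at `z`.
  have eq_z : ∀ t ∈ uIcc z y, f t ≤ c → t = z := by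
    intro t ht htc
    have hdist : |z - y| ≤ |t - y| := hmin ⟨hsub ht, htc⟩
    rcases le_total z y with hzy | hyz
    · rw [uIcc_of_le hzy] at ht
      rw [abs_of_nonpos (by linarith), abs_of_nonpos (by linarith [ht.2])] at hdist
      linarith [ht.1]
    · rw [uIcc_of_ge hyz] at ht
      rw [abs_of_nonneg (by linarith), abs_of_nonneg (by linarith [ht.1])] at hdist
      linarith [ht.2]
  obtain ⟨z', hz', hz'c⟩ := intermediate_value_uIcc (hf.mono hsub) (mem_uIcc_of_le hzc hy)
  have hfz : f z = c := eq_z z' hz' hz'c.le ▸ hz'c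
  refine ⟨z, hz, hfz, fun t ht => le_of_not_gt fun htc => ?_⟩
  exact htc.ne (eq_z t ht htc.le ▸ hfz)

lemma sqrt_two_mul_mul_le_half_sq_add {w : ℝ} (hw : 0 ≤ w) (x : ℝ) :
    √(2 * w) * x ≤ 1 / 2 * x ^ 2 + w := by
  nlinarith [sq_nonneg (x - √(2 * w)), Real.sq_sqrt (by positivity : 0 ≤ 2 * w)]

lemma mul_sqrt_div_two_mul_sqrt_two (r w : ℝ) : r * √w / (2 * √2) = r / 4 * √(2 * w) := by
  rw [Real.sqrt_mul zero_le_two]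
  field_simp
  rw [Real.sq_sqrt zero_le_two]
  ring

lemma sub_mul_le_setIntegral_Icc {f : ℝ → ℝ} {a b c : ℝ} (hab : a ≤ b)
    (hf : IntegrableOn f (Icc a b)) (hc : ∀ t ∈ Icc a b, c ≤ f t) :
    (b - a) * c ≤ ∫ t in Icc a b, f t := by
  simpa [Real.volume_real_Icc_of_le hab] using
    setIntegral_ge_of_const_le measurableSet_Icc measure_Icc_lt_top.ne hc hf

section Energy

variable {E : Type*} [NormedAddCommGroup E] [NormedSpace ℝ E] [CompleteSpace E]
  {γ γ' : ℝ → E} {s v : ℝ}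

lemma norm_sub_le_integral_norm_deriv (hγ : ∀ t ∈ uIcc s v, HasDerivAt γ (γ' t) t)
    (hγ' : ContinuousOn γ' (uIcc s v)) :
    ‖γ v - γ s‖ ≤ ∫ t in Ι s v, ‖γ' t‖ := by
  rw [← intervalIntegral.integral_eq_sub_of_hasDerivAt hγ hγ'.intervalIntegrable]
  exact intervalIntegral.norm_integral_le_integral_norm_uIoc

lemma sqrt_two_mul_norm_sub_le_integral_energy {V : ℝ → ℝ} {w₀ : ℝ}
    (hγ : ∀ t ∈ uIcc s v, HasDerivAt γ (γ' t) t) (hγ' : ContinuousOn γ' (uIcc s v))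
    (hV : ContinuousOn V (uIcc s v)) (hw₀ : 0 ≤ w₀) (hVw₀ : ∀ t ∈ uIcc s v, w₀ ≤ V t) :
    √(2 * w₀) * ‖γ v - γ s‖ ≤ ∫ t in Ι s v, (1 / 2 * ‖γ' t‖ ^ 2 + V t) := by
  have hlen : IntegrableOn (fun t => ‖γ' t‖) (Ι s v) :=
    hγ'.norm.integrableOn_uIcc.mono_set uIoc_subset_uIcc
  have henergy : IntegrableOn (fun t => 1 / 2 * ‖γ' t‖ ^ 2 + V t) (Ι s v) :=
    ((continuousOn_const.mul (hγ'.norm.pow 2)).add hV).integrableOn_uIcc.mono_set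
      uIoc_subset_uIcc
  calc √(2 * w₀) * ‖γ v - γ s‖ ≤ √(2 * w₀) * ∫ t in Ι s v, ‖γ' t‖ := by
        gcongr; exact norm_sub_le_integral_norm_deriv hγ hγ'
    _ = ∫ t in Ι s v, √(2 * w₀) * ‖γ' t‖ := (integral_const_mul _ _).symm
    _ ≤ ∫ t in Ι s v, (1 / 2 * ‖γ' t‖ ^ 2 + V t) :=
        setIntegral_mono_on (hlen.const_mul _) henergy measurableSet_uIoc fun t ht => by
          linarith [sqrt_two_mul_mul_le_half_sq_add hw₀ ‖γ' t‖, hVw₀ t (uIoc_subset_uIcc ht)]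

end Energy

theorem column_dichotomy_lower_bound
    {m : ℕ} (a : EuclideanSpace ℝ (Fin m)) (r w₀ R : ℝ)
    (hr : 0 < r) (hw₀ : 0 < w₀) (hR : 0 < R)
    (W : EuclideanSpace ℝ (Fin m) → ℝ)
    (hWcont : Continuous W) (hWnonneg : ∀ v, 0 ≤ W v)
    (hWlb : ∀ v, r / 4 ≤ ‖v - a‖ → w₀ ≤ W v)
    (γ γ' : ℝ → EuclideanSpace ℝ (Fin m))
    (hγ : ∀ t ∈ Set.Icc (-R) R, HasDerivAt γ (γ' t) t)
    (hγ'cont : ContinuousOn γ' (Set.Icc (-R) R))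
    (hstar : ∃ tstar ∈ Set.Icc (-R) R, r / 2 ≤ ‖γ tstar - a‖) :
    min (r * Real.sqrt w₀ / (2 * Real.sqrt 2)) (2 * R * w₀) ≤
      ∫ t in Set.Icc (-R) R, ((1 / 2 : ℝ) * ‖γ' t‖ ^ 2 + W (γ t)) := by
  have hγcont : ContinuousOn γ (Icc (-R) R) := fun t ht =>
    (hγ t ht).continuousAt.continuousWithinAt
  have hint : IntegrableOn (fun t => (1 / 2 : ℝ) * ‖γ' t‖ ^ 2 + W (γ t)) (Icc (-R) R) :=
    ((continuousOn_const.mul (hγ'cont.norm.pow 2)).add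
      (hWcont.comp_continuousOn hγcont)).integrableOn_Icc
  obtain ⟨u, hu, hau⟩ := hstar
  by_cases hfar : ∀ t ∈ Icc (-R) R, r / 4 ≤ ‖γ t - a‖
  · calc min (r * √w₀ / (2 * √2)) (2 * R * w₀) ≤ (R - -R) * w₀ := by
          rw [sub_neg_eq_add, ← two_mul]; exact min_le_right _ _
      _ ≤ _ := sub_mul_le_setIntegral_Icc (by linarith) hint fun t ht =>
          le_add_of_nonneg_of_le (by positivity) (hWlb _ (hfar t ht))
  push Not at hfar
  obtain ⟨t₀, ht₀, hnear⟩ := hfar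
  obtain ⟨z, hz, hz_near, hcross⟩ := exists_crossing_uIcc (f := fun t => ‖γ t - a‖)
    ((hγcont.mono (uIcc_subset_Icc ht₀ hu)).sub continuousOn_const).norm hnear.le (by linarith)
  have hsub : uIcc z u ⊆ Icc (-R) R :=
    (uIcc_subset_uIcc hz right_mem_uIcc).trans (uIcc_subset_Icc ht₀ hu)
  have hgap : r / 4 ≤ ‖γ u - γ z‖ := by
    have := dist_triangle (γ u) (γ z) a
    simp only [dist_eq_norm] at this
    linarith
  calc min (r * √w₀ / (2 * √2)) (2 * R * w₀) ≤ √(2 * w₀) * (r / 4) := by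
        rw [mul_sqrt_div_two_mul_sqrt_two, mul_comm]; exact min_le_left _ _
    _ ≤ √(2 * w₀) * ‖γ u - γ z‖ := by gcongr
    _ ≤ ∫ t in Ι z u, ((1 / 2 : ℝ) * ‖γ' t‖ ^ 2 + W (γ t)) :=
        sqrt_two_mul_norm_sub_le_integral_energy (fun t ht => hγ t (hsub ht)) (hγ'cont.mono hsub)
          ((hWcont.comp_continuousOn hγcont).mono hsub) hw₀.le
          fun t ht => hWlb _ (hcross t ht)
    _ ≤ ∫ t in Icc (-R) R, ((1 / 2 : ℝ) * ‖γ' t‖ ^ 2 + W (γ t)) :=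
        setIntegral_mono_set hint
          (Filter.Eventually.of_forall fun t => add_nonneg (by positivity) (hWnonneg _))
          (uIoc_subset_uIcc.trans hsub).eventuallyLE
end
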